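/- arXiv:2106.07329 — 7 statements merged into one kernel-verified Lean document; each statement's English description precedes it below -/
import Mathlib

section
/- For any two stochastic policies π and π' on a finite aperiodic unichain MDP, the difference of average rewards satisfies ρ(π') − ρ(π) = E_{s∼d_{π'}, a∼π'}[Ā^π(s,a)], where Ā^π is the average-reward advantage function of π. -/
open Finset

/-- For any two stochastic policies π and π' on a finite aperiodic
unichain MDP, ρ(π') − ρ(π) = E_{s∼d_{π'}, a∼π'}[Ā^π(s,a)]. -/
theorem avg_reward_policy_difference
    {S A : Type*} [Fintype S] [Fintype A]
    -- transition kernel and reward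
    (P : S → A → S → ℝ) (r : S → A → ℝ)
    -- stochastic policies
    (π π' : S → A → ℝ)
    (hπ : ∀ s a, 0 ≤ π s a) (hπ1 : ∀ s, ∑ a, π s a = 1)
    (hπ' : ∀ s a, 0 ≤ π' s a) (hπ'1 : ∀ s, ∑ a, π' s a = 1)
    -- stationary state distribution of π'
    (dπ' : S → ℝ) (hd_nonneg : ∀ s, 0 ≤ dπ' s) (hd_sum : ∑ s, dπ' s = 1)
    (hd_stat : ∀ s', ∑ s, dπ' s * ∑ a, π' s a * P s a s' = dπ' s')
    -- average rewards
    (ρπ ρπ' : ℝ)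
    (hρ' : ρπ' = ∑ s, dπ' s * ∑ a, π' s a * r s a)
    -- bias, action-bias and advantage functions of π
    (Vb : S → ℝ) (Qb Ab : S → A → ℝ)
    (hBellman : ∀ s a, Qb s a = r s a - ρπ + ∑ s', P s a s' * Vb s')
    (hAdv : ∀ s a, Ab s a = Qb s a - Vb s) :
    ρπ' - ρπ = ∑ s, dπ' s * ∑ a, π' s a * Ab s a := by
  have hX : ∑ s, dπ' s * ∑ a, π' s a * ∑ s', P s a s' * Vb s'
      = ∑ s', dπ' s' * Vb s' := by
    calc ∑ s, dπ' s * ∑ a, π' s a * ∑ s', P s a s' * Vb s'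
        = ∑ s, ∑ a, ∑ s', dπ' s * (π' s a * (P s a s' * Vb s')) := by
          simp [Finset.mul_sum]
      _ = ∑ s', ∑ s, ∑ a, dπ' s * (π' s a * (P s a s' * Vb s')) := by
          conv_rhs => rw [Finset.sum_comm]
          exact Finset.sum_congr rfl fun s _ => Finset.sum_comm
      _ = ∑ s', (∑ s, dπ' s * ∑ a, π' s a * P s a s') * Vb s' := by
          refine Finset.sum_congr rfl fun s' _ => ?_
          rw [Finset.sum_mul]
          refine Finset.sum_congr rfl fun s _ => ?_
          rw [Finset.mul_sum, Finset.sum_mul]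
          exact Finset.sum_congr rfl fun a _ => by ring
      _ = ∑ s', dπ' s' * Vb s' := by simp [hd_stat]
  have expand : ∀ s, ∑ a, π' s a * Ab s a
      = (∑ a, π' s a * r s a) - ρπ + (∑ a, π' s a * ∑ s', P s a s' * Vb s') - Vb s := by
    intro s
    have h1 : ∑ a, π' s a * Ab s a
        = ∑ a, (π' s a * r s a - π' s a * ρπ
            + π' s a * (∑ s', P s a s' * Vb s') - π' s a * Vb s) := by
      refine Finset.sum_congr rfl fun a _ => ?_
      rw [hAdv, hBellman]; ring
    rw [h1]
    rw [Finset.sum_sub_distrib, Finset.sum_add_distrib, Finset.sum_sub_distrib,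
        ← Finset.sum_mul, ← Finset.sum_mul, hπ'1, one_mul, one_mul]
  have hmain : ∑ s, dπ' s * ∑ a, π' s a * Ab s a
      = (∑ s, dπ' s * ∑ a, π' s a * r s a) - ρπ
        + (∑ s, dπ' s * ∑ a, π' s a * ∑ s', P s a s' * Vb s')
        - ∑ s, dπ' s * Vb s := by
    have h2 : ∑ s, dπ' s * ∑ a, π' s a * Ab s a
        = ∑ s, (dπ' s * ∑ a, π' s a * r s a - dπ' s * ρπ
            + dπ' s * (∑ a, π' s a * ∑ s', P s a s' * Vb s') - dπ' s * Vb s) := by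
      refine Finset.sum_congr rfl fun s _ => ?_
      rw [expand s]; ring
    rw [h2, Finset.sum_sub_distrib, Finset.sum_add_distrib, Finset.sum_sub_distrib,
        ← Finset.sum_mul, hd_sum, one_mul]
  rw [hmain, hX, hρ']
  ring
end

section
/- For any two stochastic policies π and π' on a finite ergodic MDP, the total variation distance between stationary distributions satisfies D_TV(d_{π'} ∥ d_π) ≤ (κ* − 1)·E_{s∼d_π}[D_TV(π'(·|s) ∥ π(·|s))], where κ* = max_π κ^π and κ^π = Σ_{s'} d_π(s')·M^π(s,s') is Kemeny's constant (independent of s) with M^π the mean first passage time matrix. -/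
open Finset

/-- A stochastic policy. -/
def IsPolicy {S A : Type*} [Fintype A] (π : S → A → ℝ) : Prop :=
  (∀ s a, 0 ≤ π s a) ∧ ∀ s, ∑ a, π s a = 1

/-- State transition matrix induced by policy π. -/
def inducedMatrix {S A : Type*} [Fintype A] (P : S → A → S → ℝ) (π : S → A → ℝ) :
    Matrix S S ℝ :=
  Matrix.of fun s s' => ∑ a, π s a * P s a s'

/-- Fundamental matrix Z = (I − P_π + P*_π)⁻¹ where P*_π = 1 d_π^T. -/
noncomputable def fundMatrix {S : Type*} [Fintype S] [DecidableEq S]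
    (Pm : Matrix S S ℝ) (d : S → ℝ) : Matrix S S ℝ :=
  (1 - Pm + Matrix.of fun _ s' => d s')⁻¹

/-- Mean first passage time matrix M = (I − Z + E Z_dg) D, where D is the
diagonal matrix with entries 1/d(s). -/
noncomputable def mfptMatrix {S : Type*} [Fintype S] [DecidableEq S]
    (Pm : Matrix S S ℝ) (d : S → ℝ) : Matrix S S ℝ :=
  (1 - fundMatrix Pm d + Matrix.of fun _ s' => fundMatrix Pm d s' s') *
    Matrix.diagonal fun s => (d s)⁻¹

/-- Stationary distribution of the chain induced by a policy. -/
def IsStationaryDist {S A : Type*} [Fintype S] [Fintype A]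
    (P : S → A → S → ℝ) (π : S → A → ℝ) (d : S → ℝ) : Prop :=
  (∀ s, 0 < d s) ∧ (∑ s, d s = 1) ∧
    ∀ s', ∑ s, d s * ∑ a, π s a * P s a s' = d s'

/-!
Put `c = d_π (P_π - P_π')`. Since `d_π (I - P_π' + 1 d_π') = c + d_π'` and `d_π' Z' = d_π'`,
one has the perturbation identity `d_π - d_π' = c Z'`. As `c` sums to zero, the definition of
`M'` lets us replace `Z'` by `I - M' diag(d_π')`, whence
`Σ_j |d_π'(j) - d_π(j)| ≤ Σ_u |c_u| Σ_j |δ_uj - d_π'(j) M'(u,j)|`.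
Now `d_π'(j) M'(j,j) = 1`, and a minimum principle applied to the first-passage equations
`M'(i,j) = 1 + Σ_{k ≠ j} P'(i,k) M'(k,j)` gives `M' ≥ 1`; so the inner sum is
`κ^{π'} - 1 ≤ κ* - 1`. Finally `Σ_u |c_u| ≤ Σ_s d_π(s) ‖π'(·|s) - π(·|s)‖₁`.
-/

open Matrix

lemma sum_abs_vecMul_le {S : Type*} [Fintype S] (v : S → ℝ) (M : Matrix S S ℝ) :
    ∑ j, |(v ᵥ* M) j| ≤ ∑ i, |v i| * ∑ j, |M i j| := by
  calc ∑ j, |(v ᵥ* M) j| ≤ ∑ j, ∑ i, |v i| * |M i j| := by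
        gcongr with j
        exact (abs_sum_le_sum_abs _ _).trans_eq (by simp only [abs_mul])
    _ = ∑ i, |v i| * ∑ j, |M i j| := by
        rw [sum_comm]
        simp only [mul_sum]

lemma one_le_of_eq_one_add_sum {ι : Type*} [Fintype ι] {Q : ι → ι → ℝ} {T : Finset ι}
    (hQ : ∀ i k, 0 ≤ Q i k) (hQT : ∀ i, ∑ k ∈ T, Q i k ≤ 1) {f : ι → ℝ}
    (hf : ∀ i, f i = 1 + ∑ k ∈ T, Q i k * f k) (i : ι) : 1 ≤ f i := by
  obtain ⟨i₀, -, hmin⟩ := exists_min_image univ f ⟨i, mem_univ i⟩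
  have hmin_nonneg : 0 ≤ f i₀ := by
    by_contra! hneg
    have hge : (∑ k ∈ T, Q i₀ k) * f i₀ ≤ ∑ k ∈ T, Q i₀ k * f k := by
      rw [sum_mul]
      gcongr with k
      · exact hQ i₀ k
      · exact hmin k (mem_univ k)
    have := mul_le_mul_of_nonpos_right (hQT i₀) hneg.le
    linarith [hf i₀]
  rw [hf i]
  have := sum_nonneg fun k (_ : k ∈ T) =>
    mul_nonneg (hQ i k) (hmin_nonneg.trans (hmin k (mem_univ k)))
  linarith

section FundamentalMatrix

variable {S : Type*} [Fintype S] [DecidableEq S]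

lemma mfptMatrix_apply (Pm : Matrix S S ℝ) (d : S → ℝ) (i j : S) :
    mfptMatrix Pm d i j =
      ((1 : Matrix S S ℝ) i j - fundMatrix Pm d i j + fundMatrix Pm d j j) * (d j)⁻¹ := by
  simp [mfptMatrix, mul_diagonal]

lemma mfptMatrix_apply_self (Pm : Matrix S S ℝ) (d : S → ℝ) (j : S) :
    mfptMatrix Pm d j j = (d j)⁻¹ := by
  simp [mfptMatrix_apply]

lemma fundMatrix_apply_eq (Pm : Matrix S S ℝ) {d : S → ℝ} {j : S} (hj : d j ≠ 0) (u : S) :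
    fundMatrix Pm d u j =
      (1 : Matrix S S ℝ) u j + fundMatrix Pm d j j - d j * mfptMatrix Pm d u j := by
  rw [mfptMatrix_apply]
  field_simp
  ring

lemma vecMul_one_sub_add_of (Pm : Matrix S S ℝ) (d v : S → ℝ) :
    v ᵥ* (1 - Pm + of fun _ s' => d s') = v - v ᵥ* Pm + (∑ i, v i) • d := by
  rw [vecMul_add, vecMul_sub, vecMul_one]
  congr 1
  ext j
  simp [vecMul, dotProduct, Finset.sum_mul]

lemma vecMul_fundMatrix {Pm : Matrix S S ℝ} {d : S → ℝ}
    (hA : IsUnit (1 - Pm + of fun _ s' => d s' : Matrix S S ℝ)) (v : S → ℝ) :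
    (v - v ᵥ* Pm + (∑ i, v i) • d) ᵥ* fundMatrix Pm d = v := by
  rw [← vecMul_one_sub_add_of, fundMatrix, vecMul_vecMul,
    mul_nonsing_inv _ ((isUnit_iff_isUnit_det _).mp hA), vecMul_one]

variable {Pm : Matrix S S ℝ} {d : S → ℝ}

lemma vecMul_fundMatrix_of_stationary (hA : IsUnit (1 - Pm + of fun _ s' => d s' : Matrix S S ℝ))
    (hstat : d ᵥ* Pm = d) (hsum : ∑ s, d s = 1) : d ᵥ* fundMatrix Pm d = d := by
  simpa [hstat, hsum] using vecMul_fundMatrix hA d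

lemma mul_fundMatrix (hA : IsUnit (1 - Pm + of fun _ s' => d s' : Matrix S S ℝ))
    (hstat : d ᵥ* Pm = d) (hsum : ∑ s, d s = 1) :
    Pm * fundMatrix Pm d = fundMatrix Pm d + (of fun _ s' => d s') - 1 := by
  have hdZ := vecMul_fundMatrix_of_stationary hA hstat hsum
  have hEZ : (of fun _ s' => d s' : Matrix S S ℝ) * fundMatrix Pm d = of fun _ s' => d s' := by
    ext i j
    simpa [mul_apply, vecMul, dotProduct] using congrFun hdZ j
  have hAZ := mul_nonsing_inv _ ((isUnit_iff_isUnit_det _).mp hA)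
  rw [← fundMatrix, add_mul, sub_mul, one_mul, hEZ] at hAZ
  rw [← hAZ]
  abel

lemma mul_mfptMatrix (hA : IsUnit (1 - Pm + of fun _ s' => d s' : Matrix S S ℝ))
    (hstat : d ᵥ* Pm = d) (hsum : ∑ s, d s = 1) (hrow : ∀ i, ∑ k, Pm i k = 1) :
    Pm * mfptMatrix Pm d =
      mfptMatrix Pm d + (Pm - of fun _ s' => d s') * diagonal fun s => (d s)⁻¹ := by
  have hPE : Pm * (of fun _ s' => fundMatrix Pm d s' s' : Matrix S S ℝ) =
      of fun _ s' => fundMatrix Pm d s' s' := by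
    ext i j
    simp [mul_apply, ← Finset.sum_mul, hrow]
  rw [mfptMatrix, ← mul_assoc, mul_add, mul_sub, mul_one, mul_fundMatrix hA hstat hsum, hPE,
    ← add_mul]
  congr 1
  abel

lemma mfptMatrix_eq_one_add_sum_erase (hA : IsUnit (1 - Pm + of fun _ s' => d s' : Matrix S S ℝ))
    (hstat : d ᵥ* Pm = d) (hsum : ∑ s, d s = 1) (hrow : ∀ i, ∑ k, Pm i k = 1)
    {j : S} (hj : d j ≠ 0) (i : S) :
    mfptMatrix Pm d i j = 1 + ∑ k ∈ univ.erase j, Pm i k * mfptMatrix Pm d k j := by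
  have h := congrFun (congrFun (mul_mfptMatrix hA hstat hsum hrow) i) j
  rw [Matrix.add_apply, mul_diagonal, Matrix.sub_apply, of_apply, mul_apply] at h
  rw [Finset.sum_erase_eq_sub (mem_univ j), h, mfptMatrix_apply_self]
  field_simp
  ring

lemma one_le_mfptMatrix (hA : IsUnit (1 - Pm + of fun _ s' => d s' : Matrix S S ℝ))
    (hstat : d ᵥ* Pm = d) (hsum : ∑ s, d s = 1) (hrow : ∀ i, ∑ k, Pm i k = 1)
    (hnonneg : ∀ i k, 0 ≤ Pm i k) {j : S} (hj : d j ≠ 0) (i : S) :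
    1 ≤ mfptMatrix Pm d i j :=
  one_le_of_eq_one_add_sum hnonneg
    (fun i => (sum_le_univ_sum_of_nonneg (hnonneg i)).trans_eq (hrow i))
    (mfptMatrix_eq_one_add_sum_erase hA hstat hsum hrow hj) i

lemma sum_abs_one_sub_mul_mfptMatrix (hA : IsUnit (1 - Pm + of fun _ s' => d s' : Matrix S S ℝ))
    (hstat : d ᵥ* Pm = d) (hsum : ∑ s, d s = 1) (hrow : ∀ i, ∑ k, Pm i k = 1)
    (hnonneg : ∀ i k, 0 ≤ Pm i k) (hpos : ∀ s, 0 < d s) (u : S) :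
    ∑ j, |(1 : Matrix S S ℝ) u j - d j * mfptMatrix Pm d u j| =
      ∑ j, d j * mfptMatrix Pm d u j - 1 := by
  have hterm : ∀ j, |(1 : Matrix S S ℝ) u j - d j * mfptMatrix Pm d u j| =
      d j * mfptMatrix Pm d u j - (1 : Matrix S S ℝ) u j := by
    intro j
    rcases eq_or_ne u j with rfl | huj
    · simp [mfptMatrix_apply_self, (hpos u).ne']
    · have := one_le_mfptMatrix hA hstat hsum hrow hnonneg (hpos j).ne' u
      rw [one_apply_ne huj, zero_sub, abs_neg, sub_zero,
        abs_of_nonneg (mul_nonneg (hpos j).le (zero_le_one.trans this))]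
  rw [sum_congr rfl fun j _ => hterm j, sum_sub_distrib]
  simp [one_apply]

lemma one_le_sum_mul_mfptMatrix (hA : IsUnit (1 - Pm + of fun _ s' => d s' : Matrix S S ℝ))
    (hstat : d ᵥ* Pm = d) (hsum : ∑ s, d s = 1) (hrow : ∀ i, ∑ k, Pm i k = 1)
    (hnonneg : ∀ i k, 0 ≤ Pm i k) (hpos : ∀ s, 0 < d s) (u : S) :
    1 ≤ ∑ j, d j * mfptMatrix Pm d u j := by
  rw [← sub_nonneg, ← sum_abs_one_sub_mul_mfptMatrix hA hstat hsum hrow hnonneg hpos u]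
  exact sum_nonneg fun j _ => abs_nonneg _

lemma vecMul_fundMatrix_apply_of_sum_eq_zero {c : S → ℝ} (hc : ∑ u, c u = 0) {j : S}
    (hj : d j ≠ 0) :
    (c ᵥ* fundMatrix Pm d) j =
      ∑ u, c u * ((1 : Matrix S S ℝ) u j - d j * mfptMatrix Pm d u j) := by
  simp only [vecMul, dotProduct]
  rw [sum_congr rfl fun u _ => congrArg (c u * ·) (fundMatrix_apply_eq Pm hj u)]
  simp only [mul_sub, mul_add, sum_sub_distrib, sum_add_distrib, ← sum_mul, hc]
  ring

end FundamentalMatrix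

section Perturbation

variable {S : Type*} [Fintype S] [DecidableEq S] {Pm : Matrix S S ℝ} {d : S → ℝ}

lemma sub_eq_vecMul_fundMatrix (hA : IsUnit (1 - Pm + of fun _ s' => d s' : Matrix S S ℝ))
    (hstat : d ᵥ* Pm = d) (hsum : ∑ s, d s = 1) {v : S → ℝ} (hv : ∑ s, v s = 1) :
    (v - v ᵥ* Pm) ᵥ* fundMatrix Pm d = v - d := by
  have h := vecMul_fundMatrix hA v
  rw [hv, one_smul, add_vecMul, vecMul_fundMatrix_of_stationary hA hstat hsum] at h
  exact eq_sub_of_add_eq h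

lemma sum_abs_sub_le_sum_abs_mul_mfptMatrix
    (hA : IsUnit (1 - Pm + of fun _ s' => d s' : Matrix S S ℝ))
    (hstat : d ᵥ* Pm = d) (hsum : ∑ s, d s = 1) (hrow : ∀ i, ∑ k, Pm i k = 1)
    (hnonneg : ∀ i k, 0 ≤ Pm i k) (hpos : ∀ s, 0 < d s) {v : S → ℝ} (hv : ∑ s, v s = 1) :
    ∑ j, |d j - v j| ≤
      ∑ u, |(v - v ᵥ* Pm) u| * (∑ j, d j * mfptMatrix Pm d u j - 1) := by
  set c := v - v ᵥ* Pm
  have hc : ∑ u, c u = 0 := by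
    simp [c, sum_sub_distrib, hv, vecMul, dotProduct,
      sum_comm (γ := S) (f := fun u s => v s * Pm s u), ← mul_sum, hrow]
  have hdiff : ∀ j, d j - v j =
      -∑ u, c u * ((1 : Matrix S S ℝ) u j - d j * mfptMatrix Pm d u j) := fun j => by
    rw [← vecMul_fundMatrix_apply_of_sum_eq_zero hc (hpos j).ne',
      sub_eq_vecMul_fundMatrix hA hstat hsum hv]
    simp
  calc ∑ j, |d j - v j|
      ≤ ∑ j, ∑ u, |c u| * |(1 : Matrix S S ℝ) u j - d j * mfptMatrix Pm d u j| := by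
        gcongr with j
        rw [hdiff, abs_neg]
        refine (abs_sum_le_sum_abs _ _).trans_eq ?_
        simp only [abs_mul]
    _ = ∑ u, |c u| * (∑ j, d j * mfptMatrix Pm d u j - 1) := by
        rw [sum_comm]
        simp only [← mul_sum, sum_abs_one_sub_mul_mfptMatrix hA hstat hsum hrow hnonneg hpos]

end Perturbation

section Policies

variable {S A : Type*} [Fintype A] {P : S → A → S → ℝ}

lemma inducedMatrix_nonneg (hP : ∀ s a s', 0 ≤ P s a s') {π : S → A → ℝ}
    (hπ : ∀ s a, 0 ≤ π s a) (s s' : S) : 0 ≤ inducedMatrix P π s s' :=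
  sum_nonneg fun a _ => mul_nonneg (hπ s a) (hP s a s')

lemma sum_inducedMatrix_apply [Fintype S] (hP : ∀ s a, ∑ s', P s a s' = 1) {π : S → A → ℝ}
    (hπ : ∀ s, ∑ a, π s a = 1) (s : S) : ∑ s', inducedMatrix P π s s' = 1 := by
  simp only [inducedMatrix, of_apply]
  rw [sum_comm]
  simp [← mul_sum, hP, hπ]

lemma sum_abs_inducedMatrix_sub_le [Fintype S] (hP_nonneg : ∀ s a s', 0 ≤ P s a s')
    (hP_sum : ∀ s a, ∑ s', P s a s' = 1) (π π' : S → A → ℝ) (s : S) :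
    ∑ s', |(inducedMatrix P π - inducedMatrix P π') s s'| ≤ ∑ a, |π' s a - π s a| := by
  calc ∑ s', |(inducedMatrix P π - inducedMatrix P π') s s'|
      ≤ ∑ s', ∑ a, |π' s a - π s a| * P s a s' := by
        gcongr with s'
        simp only [inducedMatrix, Matrix.sub_apply, of_apply, ← sum_sub_distrib, ← sub_mul]
        refine (abs_sum_le_sum_abs _ _).trans_eq (sum_congr rfl fun a _ => ?_)
        rw [abs_mul, abs_sub_comm, abs_of_nonneg (hP_nonneg s a s')]
    _ = ∑ a, |π' s a - π s a| := by
        rw [sum_comm]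
        simp [← mul_sum, hP_sum]

lemma IsStationaryDist.vecMul_inducedMatrix [Fintype S] {π : S → A → ℝ} {d : S → ℝ}
    (hd : IsStationaryDist P π d) : d ᵥ* inducedMatrix P π = d :=
  funext hd.2.2

end Policies

theorem stationary_distribution_tv_bound_general
    {S A : Type*} [Fintype S] [Fintype A] [DecidableEq S]
    (P : S → A → S → ℝ)
    (hP_nonneg : ∀ s a s', 0 ≤ P s a s') (hP_sum : ∀ s a, ∑ s', P s a s' = 1)
    (π π' : S → A → ℝ) (hπ' : IsPolicy π')
    (dπ dπ' : S → ℝ)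
    (hd : IsStationaryDist P π dπ) (hd' : IsStationaryDist P π' dπ')
    -- fundamental matrices exist (irreducible aperiodic chains)
    (hZ : ∀ p d, IsPolicy p → IsStationaryDist P p d →
      IsUnit (1 - inducedMatrix P p + Matrix.of fun _ s' => d s' : Matrix S S ℝ))
    -- κ* = max_π κ^π where κ^π = Σ_{s'} d_π(s') M^π(s,s') (independent of s)
    (κstar : ℝ)
    (hκ_ub : ∀ p d, IsPolicy p → IsStationaryDist P p d →
      ∀ s, ∑ s', d s' * mfptMatrix (inducedMatrix P p) d s s' ≤ κstar) :
    (1 / 2) * ∑ s, |dπ' s - dπ s|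
      ≤ (κstar - 1) * ∑ s, dπ s * ((1 / 2) * ∑ a, |π' s a - π s a|) := by
  obtain hS | ⟨⟨s₀⟩⟩ := isEmpty_or_nonempty S
  · simp
  set Pm := inducedMatrix P π
  set Pm' := inducedMatrix P π'
  have hA' := hZ π' dπ' hπ' hd'
  have hstat' := hd'.vecMul_inducedMatrix
  have hrow' := sum_inducedMatrix_apply hP_sum hπ'.2
  have hnonneg' := inducedMatrix_nonneg hP_nonneg hπ'.1
  have hκ : ∀ u, ∑ j, dπ' j * mfptMatrix Pm' dπ' u j - 1 ≤ κstar - 1 :=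
    fun u => sub_le_sub_right (hκ_ub π' dπ' hπ' hd' u) 1
  have hκ_one : 0 ≤ κstar - 1 := (sub_nonneg.2 <|
    one_le_sum_mul_mfptMatrix hA' hstat' hd'.2.1 hrow' hnonneg' hd'.1 s₀).trans (hκ s₀)
  have hc : dπ - dπ ᵥ* Pm' = dπ ᵥ* (Pm - Pm') := by
    rw [vecMul_sub, hd.vecMul_inducedMatrix]
  have hTV : ∑ u, |(dπ ᵥ* (Pm - Pm')) u| ≤ ∑ s, dπ s * ∑ a, |π' s a - π s a| :=
    (sum_abs_vecMul_le _ _).trans <| sum_le_sum fun s _ => by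
      rw [abs_of_pos (hd.1 s)]
      exact mul_le_mul_of_nonneg_left
        (sum_abs_inducedMatrix_sub_le hP_nonneg hP_sum π π' s) (hd.1 s).le
  calc (1 / 2) * ∑ s, |dπ' s - dπ s|
      ≤ (1 / 2) * ∑ u, |(dπ ᵥ* (Pm - Pm')) u| *
          (∑ j, dπ' j * mfptMatrix Pm' dπ' u j - 1) := by
        rw [← hc]
        gcongr (1 / 2) * ?_
        exact sum_abs_sub_le_sum_abs_mul_mfptMatrix hA' hstat' hd'.2.1 hrow' hnonneg' hd'.1 hd.2.1
    _ ≤ (1 / 2) * ((κstar - 1) * ∑ u, |(dπ ᵥ* (Pm - Pm')) u|) := by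
        gcongr (1 / 2) * ?_
        rw [mul_sum]
        exact sum_le_sum fun u _ =>
          (mul_le_mul_of_nonneg_left (hκ u) (abs_nonneg _)).trans_eq (mul_comm _ _)
    _ ≤ (1 / 2) * ((κstar - 1) * ∑ s, dπ s * ∑ a, |π' s a - π s a|) := by
        gcongr
    _ = (κstar - 1) * ∑ s, dπ s * ((1 / 2) * ∑ a, |π' s a - π s a|) := by
        rw [mul_left_comm, mul_sum]
        simp_rw [mul_left_comm]

/-- D_TV(d_{π'} ∥ d_π) ≤ (κ* − 1)·E_{s∼d_π}[D_TV(π'(·|s) ∥ π(·|s))],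
where κ* = max_π κ^π is the maximal Kemeny constant over stationary policies. -/
theorem stationary_distribution_tv_bound
    {S A : Type*} [Fintype S] [Fintype A] [DecidableEq S] [Nonempty S]
    (P : S → A → S → ℝ)
    (hP_nonneg : ∀ s a s', 0 ≤ P s a s') (hP_sum : ∀ s a, ∑ s', P s a s' = 1)
    (π π' : S → A → ℝ) (hπ : IsPolicy π) (hπ' : IsPolicy π')
    (dπ dπ' : S → ℝ)
    (hd : IsStationaryDist P π dπ) (hd' : IsStationaryDist P π' dπ')
    -- fundamental matrices exist (irreducible aperiodic chains)
    (hZ : ∀ p d, IsPolicy p → IsStationaryDist P p d →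
      IsUnit (1 - inducedMatrix P p + Matrix.of fun _ s' => d s' : Matrix S S ℝ))
    -- κ* = max_π κ^π where κ^π = Σ_{s'} d_π(s') M^π(s,s') (independent of s)
    (κstar : ℝ)
    (hκ_ub : ∀ p d, IsPolicy p → IsStationaryDist P p d →
      ∀ s, ∑ s', d s' * mfptMatrix (inducedMatrix P p) d s s' ≤ κstar)
    (hκ_mem : ∃ p d, IsPolicy p ∧ IsStationaryDist P p d ∧
      ∀ s, ∑ s', d s' * mfptMatrix (inducedMatrix P p) d s s' = κstar) :
    (1 / 2) * ∑ s, |dπ' s - dπ s|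
      ≤ (κstar - 1) * ∑ s, dπ s * ((1 / 2) * ∑ a, |π' s a - π s a|) :=
  stationary_distribution_tv_bound_general P hP_nonneg hP_sum π π' hπ' dπ dπ' hd hd' hZ κstar hκ_ub
end

section
/- For an irreducible aperiodic finite Markov chain with transition matrix P and eigenvalues 1 = λ_1 > |λ_i| for i ≥ 2, Kemeny's constant κ = tr((I − P + P*)^{-1}) satisfies κ ≤ 1 + (n − 1)/(1 − λ*), where n is the number of states and λ* = max_{i≥2}|λ_i| is the second largest eigenvalue modulus. -/
/-!
Since `P 1 = 1` and `dᵀ 1 = 1`, adding the rank-one matrix `P* = 1 dᵀ` to `I - P` moves the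
eigenvalue `0` of `I - P` (eigenvector `1`) to `1` and keeps the others (Brauer's theorem). So
`Z = (I - P + P*)⁻¹` has eigenvalues `1` and `(1 - λᵢ)⁻¹`, `i ≥ 2`, and
`κ = 1 + ∑ᵢ Re (1 - λᵢ)⁻¹`, where each term is at most `|1 - λᵢ|⁻¹ ≤ (1 - |λᵢ|)⁻¹ ≤ (1 - λ*)⁻¹`.
-/

open Finset Polynomial

theorem Polynomial.reverse_prod {ι R : Type*} [CommSemiring R] [NoZeroDivisors R]
    (s : Finset ι) (f : ι → R[X]) : (∏ i ∈ s, f i).reverse = ∏ i ∈ s, (f i).reverse := by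
  classical
  induction s using Finset.induction_on with
  | empty => simpa using reverse_C (1 : R)
  | insert a s ha ih => rw [prod_insert ha, prod_insert ha, reverse_mul_of_domain, ih]

theorem Polynomial.reverse_X_sub_C {R : Type*} [CommRing R] [Nontrivial R] (a : R) :
    (X - C a).reverse = 1 - C a * X := by
  rw [sub_eq_add_neg, ← C_neg, reverse_add_C, natDegree_X, pow_one, C_neg, neg_mul,
    ← sub_eq_add_neg]
  simpa using (reverse_X_mul (1 : R[X])).trans (by simpa using reverse_C (1 : R))

theorem Complex.re_inv_one_sub_le {z : ℂ} {r : ℝ} (hz : ‖z‖ ≤ r) (hr : r < 1) :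
    ((1 - z)⁻¹).re ≤ (1 - r)⁻¹ :=
  calc ((1 - z)⁻¹).re ≤ ‖(1 - z)⁻¹‖ := re_le_norm _
    _ = ‖1 - z‖⁻¹ := norm_inv _
    _ ≤ (1 - r)⁻¹ := by
      have := norm_sub_norm_le (1 : ℂ) z
      rw [norm_one] at this
      exact inv_anti₀ (by linarith) (by linarith)

namespace Matrix

variable {ι R K : Type*} [Fintype ι] [DecidableEq ι]

theorem map_nonsing_inv {S : Type*} [CommRing R] [CommRing S] (f : R →+* S) {A : Matrix ι ι R}
    (hA : IsUnit A) : A⁻¹.map f = (A.map f)⁻¹ := by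
  refine (inv_eq_right_inv ?_).symm
  rw [← Matrix.map_mul, mul_nonsing_inv _ ((isUnit_iff_isUnit_det A).mp hA),
    Matrix.map_one _ (map_zero f) (map_one f)]

section SplitCharpoly

variable [CommRing R] {M : Matrix ι ι R} {μ : ι → R}

theorem det_eq_prod_of_charpoly_eq_prod (h : M.charpoly = ∏ i, (X - C (μ i))) :
    M.det = ∏ i, μ i := by
  rw [det_eq_sign_charpoly_coeff, h, coeff_zero_eq_eval_zero, eval_prod]
  simp only [eval_sub, eval_X, eval_C, zero_sub, prod_neg, card_univ, ← mul_assoc, ← pow_add,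
    Even.neg_one_pow ⟨_, rfl⟩, one_mul]

theorem trace_eq_sum_of_charpoly_eq_prod (h : M.charpoly = ∏ i, (X - C (μ i))) :
    M.trace = ∑ i, μ i := by
  cases isEmpty_or_nonempty ι
  · simp
  · rw [trace_eq_neg_charpoly_coeff, h, Fintype.card,
      prod_X_sub_C_coeff_card_pred _ _ univ_nonempty.card_pos, neg_neg]

theorem charpoly_scalar_sub (M : Matrix ι ι R) (a : R) :
    (scalar ι a - M).charpoly = (-1) ^ Fintype.card ι * M.charpoly.comp (C a - X) := by
  have h : charmatrix (scalar ι a - M) = -(compRingHom (C a - X)).mapMatrix (charmatrix M) := by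
    ext i j : 1
    by_cases hij : i = j
    · subst hij; simp [charmatrix_apply_eq]; ring
    · simp [charmatrix_apply_ne _ _ _ hij, diagonal_apply_ne _ hij]
  rw [charpoly, h, det_neg, ← RingHom.map_det]
  rfl

theorem charpoly_scalar_sub_eq_prod (h : M.charpoly = ∏ i, (X - C (μ i))) (a : R) :
    (scalar ι a - M).charpoly = ∏ i, (X - C (a - μ i)) := by
  rw [charpoly_scalar_sub, h, Polynomial.prod_comp, ← card_univ, ← prod_const,
    ← prod_mul_distrib]
  refine prod_congr rfl fun i _ => ?_
  simp only [sub_comp, X_comp, C_comp, C_sub]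
  ring

end SplitCharpoly

theorem charpoly_inv_eq_prod [Field K] {A : Matrix ι ι K} (hA : IsUnit A) {μ : ι → K}
    (h : A.charpoly = ∏ i, (X - C (μ i))) : A⁻¹.charpoly = ∏ i, (X - C (μ i)⁻¹) := by
  have hdet : A.det = ∏ i, μ i := det_eq_prod_of_charpoly_eq_prod h
  have hμ : ∀ i, μ i ≠ 0 := by
    have := (isUnit_iff_isUnit_det A).mp hA
    rw [hdet, isUnit_iff_ne_zero, prod_ne_zero_iff] at this
    exact fun i => this i (mem_univ i)
  rw [charpoly_inv A hA, ← reverse_charpoly, h, reverse_prod, hdet, Ring.inverse_eq_inv',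
    ← prod_inv_distrib, map_prod, ← card_univ, ← prod_const, ← prod_mul_distrib,
    ← prod_mul_distrib]
  refine prod_congr rfl fun i _ => ?_
  have hCμ : C (μ i)⁻¹ * C (μ i) = 1 := by rw [← C_mul, inv_mul_cancel₀ (hμ i), C_1]
  rw [reverse_X_sub_C]
  linear_combination (X : K[X]) * hCμ

theorem trace_inv_eq_sum_inv [Field K] {A : Matrix ι ι K} (hA : IsUnit A) {μ : ι → K}
    (h : A.charpoly = ∏ i, (X - C (μ i))) : A⁻¹.trace = ∑ i, (μ i)⁻¹ :=
  trace_eq_sum_of_charpoly_eq_prod (charpoly_inv_eq_prod hA h)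

theorem det_one_sub_vecMulVec [CommRing R] (u v : ι → R) :
    (1 - vecMulVec u v).det = 1 - v ⬝ᵥ u := by
  rw [sub_eq_add_neg, ← neg_vecMulVec, vecMulVec_eq Unit,
    det_one_add_replicateCol_mul_replicateRow, dotProduct_neg, ← sub_eq_add_neg]

theorem mul_det_sub_vecMulVec [Field K] {B : Matrix ι ι K} {a b : ι → K} {μ : K} (hμ : μ ≠ 0)
    (h : B *ᵥ a = μ • a) : μ * (B - vecMulVec a b).det = (μ - b ⬝ᵥ a) * B.det := by
  have hpre : B *ᵥ (μ⁻¹ • a) = a := by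
    rw [mulVec_smul, h, smul_smul, inv_mul_cancel₀ hμ, one_smul]
  have hfactor : B - vecMulVec a b = B * (1 - vecMulVec (μ⁻¹ • a) b) := by
    rw [mul_sub, mul_one, mul_vecMulVec, hpre]
  rw [hfactor, det_mul, det_one_sub_vecMulVec, dotProduct_smul, smul_eq_mul]
  field_simp

theorem charmatrix_add_vecMulVec [CommRing R] (M : Matrix ι ι R) (u v : ι → R) :
    charmatrix (M + vecMulVec u v) =
      charmatrix M - vecMulVec (fun i => C (u i)) (fun j => C (v j)) := by
  ext i j : 1
  by_cases hij : i = j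
  · subst hij; simp [charmatrix_apply_eq, vecMulVec_apply]; ring
  · simp [charmatrix_apply_ne _ _ _ hij, vecMulVec_apply]; ring

theorem charmatrix_mulVec_of_mulVec_eq_smul [CommRing R] {M : Matrix ι ι R} {u : ι → R} {c : R}
    (hu : M *ᵥ u = c • u) :
    charmatrix M *ᵥ (fun i => C (u i)) = (X - C c) • fun i => C (u i) := by
  funext i
  have hi : (M.map C *ᵥ fun i => C (u i)) i = C (c * u i) :=
    (RingHom.map_mulVec C M u i).symm.trans (by rw [hu]; rfl)
  simp [charmatrix, sub_mulVec, hi, sub_mul]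

/-- Brauer's theorem on rank-one perturbations. -/
theorem X_sub_C_mul_charpoly_add_vecMulVec [Field K] {M : Matrix ι ι K} {u v : ι → K} {c : K}
    (hu : M *ᵥ u = c • u) :
    (X - C c) * (M + vecMulVec u v).charpoly = (X - C (c + v ⬝ᵥ u)) * M.charpoly := by
  -- Over `K(X)` the eigenvalue `X - c` of `charmatrix M` becomes invertible.
  apply IsFractionRing.injective K[X] (FractionRing K[X])
  set φ : K[X] →+* FractionRing K[X] := algebraMap _ _
  have heig : (charmatrix M).map φ *ᵥ (fun i => φ (C (u i))) =
      φ (X - C c) • fun i => φ (C (u i)) := by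
    funext i
    simpa [RingHom.map_mulVec, Function.comp_def] using
      congrArg (fun w => φ (w i)) (charmatrix_mulVec_of_mulVec_eq_smul hu)
  have hμ : φ (X - C c) ≠ 0 :=
    (map_ne_zero_iff φ (IsFractionRing.injective _ _)).mpr (X_sub_C_ne_zero c)
  have hmap : φ.mapMatrix (charmatrix M - vecMulVec (fun i => C (u i)) fun j => C (v j)) =
      (charmatrix M).map φ - vecMulVec (fun i => φ (C (u i))) fun j => φ (C (v j)) := by
    ext i j; simp [vecMulVec_apply]
  rw [map_mul, map_mul, charpoly, charpoly, RingHom.map_det, RingHom.map_det,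
    charmatrix_add_vecMulVec, hmap, mul_det_sub_vecMulVec hμ heig]
  simp only [RingHom.mapMatrix_apply, dotProduct, map_sub, map_add, map_sum, map_mul]
  ring

theorem charpoly_one_sub_add_vecMulVec [Field K] {P : Matrix ι ι K} {d : ι → K}
    (hP : P *ᵥ 1 = 1) (hd : d ⬝ᵥ 1 = 1) {μ : ι → K} (hchar : P.charpoly = ∏ i, (X - C (μ i)))
    {i₀ : ι} (hμ : μ i₀ = 1) :
    (1 - P + vecMulVec 1 d).charpoly =
      ∏ i, (X - C (Function.update (fun i => 1 - μ i) i₀ 1 i)) := by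
  have hker : (1 - P) *ᵥ 1 = (0 : K) • 1 := by
    rw [sub_mulVec, one_mulVec, hP, sub_self, zero_smul]
  have hbrauer := X_sub_C_mul_charpoly_add_vecMulVec (v := d) hker
  rw [hd, zero_add, C_0, sub_zero, C_1] at hbrauer
  have hshift : (1 - P).charpoly = ∏ i, (X - C (1 - μ i)) := by
    simpa using charpoly_scalar_sub_eq_prod hchar 1
  apply mul_left_cancel₀ (X_ne_zero (R := K))
  rw [hbrauer, hshift, ← mul_prod_erase univ _ (mem_univ i₀),
    ← mul_prod_erase univ _ (mem_univ i₀), Function.update_self, hμ, sub_self, C_0, sub_zero,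
    C_1, mul_left_comm]
  congr 2
  exact prod_congr rfl fun i hi => by rw [Function.update_of_ne (ne_of_mem_erase hi)]

theorem trace_inv_one_sub_add_vecMulVec {P : Matrix ι ι ℝ} {d : ι → ℝ} (hP : P *ᵥ 1 = 1)
    (hd : d ⬝ᵥ 1 = 1) (hunit : IsUnit (1 - P + vecMulVec 1 d)) {μ : ι → ℂ}
    (hchar : (P.map (algebraMap ℝ ℂ)).charpoly = ∏ i, (X - C (μ i))) {i₀ : ι} (hμ : μ i₀ = 1) :
    (1 - P + vecMulVec 1 d)⁻¹.trace = 1 + ∑ i ∈ univ.erase i₀, ((1 - μ i)⁻¹).re := by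
  set toC : ℝ →+* ℂ := algebraMap ℝ ℂ
  have hrows : P.map toC *ᵥ 1 = 1 := by
    funext i
    have hi := RingHom.map_mulVec toC P 1 i
    rw [hP] at hi
    simpa [Function.comp_def, Pi.one_def] using hi.symm
  have hmass : (toC ∘ d) ⬝ᵥ 1 = 1 := by
    have h := RingHom.map_dotProduct toC d 1
    rw [hd] at h
    simpa [Function.comp_def, Pi.one_def] using h.symm
  have hcomplex : (1 - P + vecMulVec 1 d).map toC = 1 - P.map toC + vecMulVec 1 (toC ∘ d) := by
    ext i j; simp [Matrix.one_apply, apply_ite]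
  have htrace : toC (1 - P + vecMulVec 1 d)⁻¹.trace =
      ∑ i, (Function.update (fun i => 1 - μ i) i₀ 1 i)⁻¹ := by
    rw [AddMonoidHom.map_trace, map_nonsing_inv _ hunit]
    refine trace_inv_eq_sum_inv (hunit.map toC.mapMatrix) ?_
    rw [RingHom.mapMatrix_apply, hcomplex]
    exact charpoly_one_sub_add_vecMulVec hrows hmass hchar hμ
  have hre := congrArg Complex.re htrace
  rw [Complex.re_sum, ← add_sum_erase _ _ (mem_univ i₀)] at hre
  rw [← Complex.ofReal_re (trace _), ← Complex.coe_algebraMap, hre, Function.update_self,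
    inv_one, Complex.one_re]
  congr 1
  exact sum_congr rfl fun i hi => by rw [Function.update_of_ne (ne_of_mem_erase hi)]

end Matrix

open Matrix

theorem kemeny_constant_slem_bound_general
    {n : ℕ} (hn : 0 < n)
    (P : Matrix (Fin n) (Fin n) ℝ)
    (hP_sum : ∀ i, ∑ j, P i j = 1)
    -- stationary distribution and limiting matrix P* = 1 d^T
    (d : Fin n → ℝ) (hd_sum : ∑ i, d i = 1)
    (Pstar : Matrix (Fin n) (Fin n) ℝ) (hPstar : Pstar = Matrix.of fun _ j => d j)
    (hunit : IsUnit (1 - P + Pstar))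
    -- eigenvalues λ of P (with multiplicity), λ_1 = 1 and |λ_i| < 1 for i ≥ 2
    (lam : Fin n → ℂ)
    (hchar : (P.map (algebraMap ℝ ℂ)).charpoly = ∏ i, (X - C (lam i)))
    (hlam1 : lam ⟨0, hn⟩ = 1)
    -- λ* = max_{i≥2} |λ_i|
    (lamstar : ℝ) (hstar_lt : lamstar < 1)
    (hstar_ub : ∀ i : Fin n, (i : ℕ) ≠ 0 → ‖lam i‖ ≤ lamstar)
    -- Kemeny's constant κ = tr(Z), Z = (I − P + P*)⁻¹
    (κ : ℝ) (hκ : κ = (1 - P + Pstar)⁻¹.trace) :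
    κ ≤ 1 + ((n : ℝ) - 1) / (1 - lamstar) := by
  have hPstar' : Pstar = vecMulVec 1 d := by ext i j; simp [hPstar, vecMulVec_apply]
  have hrows : P *ᵥ 1 = 1 := funext fun i => by simp [mulVec, dotProduct, hP_sum]
  have hmass : d ⬝ᵥ 1 = 1 := by simpa [dotProduct] using hd_sum
  rw [hPstar'] at hunit
  calc κ = 1 + ∑ i ∈ univ.erase (⟨0, hn⟩ : Fin n), ((1 - lam i)⁻¹).re := by
        rw [hκ, hPstar', trace_inv_one_sub_add_vecMulVec hrows hmass hunit hchar hlam1]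
    _ ≤ 1 + ∑ i ∈ univ.erase (⟨0, hn⟩ : Fin n), (1 - lamstar)⁻¹ := by
      gcongr with i hi
      exact Complex.re_inv_one_sub_le
        (hstar_ub i fun h => ne_of_mem_erase hi (Fin.ext h)) hstar_lt
    _ = 1 + ((n : ℝ) - 1) / (1 - lamstar) := by
      rw [sum_const, card_erase_of_mem (mem_univ _), card_univ, Fintype.card_fin, nsmul_eq_mul,
        Nat.cast_pred hn, div_eq_mul_inv]

/-- For an irreducible aperiodic finite Markov chain with eigenvalues
1 = λ_1 and |λ_i| < 1 for i ≥ 2, Kemeny's constant κ = tr((I − P + P*)⁻¹)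
satisfies κ ≤ 1 + (n − 1)/(1 − λ*), where λ* is the second largest eigenvalue
modulus. -/
theorem kemeny_constant_slem_bound
    {n : ℕ} (hn : 0 < n)
    (P : Matrix (Fin n) (Fin n) ℝ)
    (hP_nonneg : ∀ i j, 0 ≤ P i j) (hP_sum : ∀ i, ∑ j, P i j = 1)
    -- stationary distribution and limiting matrix P* = 1 d^T
    (d : Fin n → ℝ) (hd_pos : ∀ i, 0 < d i) (hd_sum : ∑ i, d i = 1)
    (hd_stat : ∀ j, ∑ i, d i * P i j = d j)
    (Pstar : Matrix (Fin n) (Fin n) ℝ) (hPstar : Pstar = Matrix.of fun _ j => d j)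
    (hunit : IsUnit (1 - P + Pstar))
    -- eigenvalues λ of P (with multiplicity), λ_1 = 1 and |λ_i| < 1 for i ≥ 2
    (lam : Fin n → ℂ)
    (hchar : (P.map (algebraMap ℝ ℂ)).charpoly = ∏ i, (X - C (lam i)))
    (hlam1 : lam ⟨0, hn⟩ = 1)
    (hlam_lt : ∀ i : Fin n, (i : ℕ) ≠ 0 → ‖lam i‖ < 1)
    -- λ* = max_{i≥2} |λ_i|
    (lamstar : ℝ) (hstar_lt : lamstar < 1) (hstar_nonneg : 0 ≤ lamstar)
    (hstar_ub : ∀ i : Fin n, (i : ℕ) ≠ 0 → ‖lam i‖ ≤ lamstar)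
    (hstar_mem : n = 1 ∨ ∃ i : Fin n, (i : ℕ) ≠ 0 ∧ ‖lam i‖ = lamstar)
    -- Kemeny's constant κ = tr(Z), Z = (I − P + P*)⁻¹
    (κ : ℝ) (hκ : κ = (1 - P + Pstar)⁻¹.trace) :
    κ ≤ 1 + ((n : ℝ) - 1) / (1 - lamstar) :=
  kemeny_constant_slem_bound_general hn P hP_sum d hd_sum Pstar hPstar hunit lam hchar hlam1 lamstar
    hstar_lt hstar_ub κ hκ
end

section
/- For any two stationary policies π and π' of a finite aperiodic unichain MDP, (d_{π'} − d_π)^T (I − P_{π'} + P*_{π'}) = d_π^T (P_{π'} − P_π), and hence d_{π'}^T − d_π^T = d_π^T (P_{π'} − P_π)(I − P_{π'} + P*_{π'})^{-1}. -/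
open Finset Matrix

/-- (d_{π'} − d_π)^T (I − P_{π'} + P*_{π'}) = d_π^T (P_{π'} − P_π),
and hence d_{π'}^T − d_π^T = d_π^T (P_{π'} − P_π)(I − P_{π'} + P*_{π'})⁻¹. -/
theorem stationary_distribution_perturbation_identity
    {S : Type*} [Fintype S] [DecidableEq S]
    -- induced transition matrices of the two policies
    (Pπ Pπ' : Matrix S S ℝ)
    (hPπ_nonneg : ∀ i j, 0 ≤ Pπ i j) (hPπ_sum : ∀ i, ∑ j, Pπ i j = 1)
    (hPπ'_nonneg : ∀ i j, 0 ≤ Pπ' i j) (hPπ'_sum : ∀ i, ∑ j, Pπ' i j = 1)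
    -- stationary distributions: d^T P = d^T
    (dπ dπ' : S → ℝ)
    (hd_nonneg : ∀ i, 0 ≤ dπ i) (hd_sum : ∑ i, dπ i = 1)
    (hd'_nonneg : ∀ i, 0 ≤ dπ' i) (hd'_sum : ∑ i, dπ' i = 1)
    (hd_stat : dπ ᵥ* Pπ = dπ) (hd'_stat : dπ' ᵥ* Pπ' = dπ')
    -- limiting matrix P*_{π'} = 1 d_{π'}^T
    (Pstar' : Matrix S S ℝ) (hPstar' : Pstar' = Matrix.of fun _ j => dπ' j)
    -- invertibility of I − P_{π'} + P*_{π'} (aperiodic unichain)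
    (hunit : IsUnit (1 - Pπ' + Pstar')) :
    (dπ' - dπ) ᵥ* (1 - Pπ' + Pstar') = dπ ᵥ* (Pπ' - Pπ) ∧
    dπ' - dπ = dπ ᵥ* ((Pπ' - Pπ) * (1 - Pπ' + Pstar')⁻¹) := by
  have hstar : ∀ (d : S → ℝ), (∑ i, d i = 1) → d ᵥ* Pstar' = dπ' := by
    intro d hsum
    funext j
    simp only [hPstar', Matrix.vecMul, dotProduct, Matrix.of_apply]
    rw [← Finset.sum_mul, hsum, one_mul]
  have h1 : (dπ' - dπ) ᵥ* (1 - Pπ' + Pstar') = dπ ᵥ* (Pπ' - Pπ) := by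
    rw [Matrix.sub_vecMul, Matrix.vecMul_add, Matrix.vecMul_add, Matrix.vecMul_sub,
        Matrix.vecMul_sub, Matrix.vecMul_one, Matrix.vecMul_one, Matrix.vecMul_sub,
        hd'_stat, hd_stat, hstar dπ' hd'_sum, hstar dπ hd_sum]
    abel
  refine ⟨h1, ?_⟩
  have hinv : (1 - Pπ' + Pstar') * (1 - Pπ' + Pstar')⁻¹ = 1 :=
    Matrix.mul_nonsing_inv _ ((Matrix.isUnit_iff_isUnit_det _).mp hunit)
  calc dπ' - dπ = (dπ' - dπ) ᵥ* ((1 - Pπ' + Pstar') * (1 - Pπ' + Pstar')⁻¹) := by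
        rw [hinv, Matrix.vecMul_one]
    _ = ((dπ' - dπ) ᵥ* (1 - Pπ' + Pstar')) ᵥ* (1 - Pπ' + Pstar')⁻¹ := by
        rw [Matrix.vecMul_vecMul]
    _ = (dπ ᵥ* (Pπ' - Pπ)) ᵥ* (1 - Pπ' + Pstar')⁻¹ := by rw [h1]
    _ = dπ ᵥ* ((Pπ' - Pπ) * (1 - Pπ' + Pstar')⁻¹) := by rw [Matrix.vecMul_vecMul]
end

section
/- For the mean first passage time matrix M^π = (I − Z^π + E Z^π_dg) D^π of an irreducible aperiodic finite Markov chain, the operator ∞-norm satisfies ‖I − M^π (D^π)^{-1}‖_∞ = κ^π − 1, where κ^π = Σ_{s'} d_π(s') M^π(s,s') is Kemeny's constant. -/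
open Finset Matrix

/-- for the mean first passage time matrix M = (I − Z + E Z_dg) D,
the ∞-operator norm (maximum absolute row sum) of I − M D⁻¹ equals κ − 1,
where κ is Kemeny's constant. -/
theorem mfpt_matrix_inf_norm
    {S : Type*} [Fintype S] [DecidableEq S] [Nonempty S]
    (P : Matrix S S ℝ)
    (hP_nonneg : ∀ i j, 0 ≤ P i j) (hP_sum : ∀ i, ∑ j, P i j = 1)
    -- stationary distribution (all entries positive) and P* = 1 d^T
    (d : S → ℝ) (hd_pos : ∀ i, 0 < d i) (hd_sum : ∑ i, d i = 1)
    (hd_stat : ∀ j, ∑ i, d i * P i j = d j)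
    (Pstar : Matrix S S ℝ) (hPstar : Pstar = Matrix.of fun _ j => d j)
    (hunit : IsUnit (1 - P + Pstar))
    -- fundamental matrix Z = (I − P + P*)⁻¹
    (Z : Matrix S S ℝ) (hZ : Z = (1 - P + Pstar)⁻¹)
    -- mean first passage time matrix M = (I − Z + E Z_dg) D, D = diag(1/d(s));
    -- its entries are mean first passage times, hence nonnegative
    (M : Matrix S S ℝ)
    (hM : M = (1 - Z + Matrix.of fun _ j => Z j j) * Matrix.diagonal fun s => (d s)⁻¹)
    (hM_nonneg : ∀ i j, 0 ≤ M i j)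
    -- Kemeny's constant κ = Σ_{s'} d(s')·M(s,s'), independent of s, and κ ≥ 1
    (κ : ℝ) (hκ : ∀ s, ∑ s', d s' * M s s' = κ) (hκ1 : 1 ≤ κ) :
    Finset.univ.sup' Finset.univ_nonempty
        (fun s => ∑ s', |(1 - M * Matrix.diagonal d) s s'|) = κ - 1 := by
  have hMd : ∀ s, M s s = (d s)⁻¹ := by
    intro s
    simp [hM, Matrix.mul_diagonal, Matrix.add_apply, Matrix.sub_apply, Matrix.one_apply]
  have hrow : ∀ s, ∑ s', |(1 - M * Matrix.diagonal d) s s'| = κ - 1 := by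
    intro s
    have h1 : ∀ s', (1 - M * Matrix.diagonal d) s s'
        = (if s = s' then (1 : ℝ) else 0) - M s s' * d s' := by
      intro s'; simp [Matrix.sub_apply, Matrix.mul_diagonal, Matrix.one_apply]
    have hsd : M s s * d s = 1 := by
      rw [hMd s]; field_simp [(hd_pos s).ne']
    have h2 : ∑ s', |(1 - M * Matrix.diagonal d) s s'|
        = ∑ s', (M s s' * d s' - if s = s' then M s s' * d s' else 0) := by
      apply Finset.sum_congr rfl
      intro s' _
      rw [h1]
      by_cases h : s = s'
      · subst h; simp [hsd]
      · simp [h, abs_of_nonneg (mul_nonneg (hM_nonneg _ _) (hd_pos s').le)]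
    rw [h2, Finset.sum_sub_distrib, Finset.sum_ite_eq, if_pos (Finset.mem_univ s), hsd]
    have h3 : ∑ s', M s s' * d s' = κ := by
      rw [← hκ s]; apply Finset.sum_congr rfl; intros; ring
    rw [h3]
  have hfun : (fun s => ∑ s', |(1 - M * Matrix.diagonal d) s s'|) = fun _ => κ - 1 :=
    funext hrow
  rw [hfun, Finset.sup'_const]
end

section
/- Consider the discounted policy improvement lower bound L(γ) = E_{s∼d_{π,γ}, a∼π'}[A_γ^π(s,a)] − (2γε_γ/(1−γ))·E_{s∼d_{π,γ}}[D_TV(π'∥π)[s]] where ε_γ = max_s|E_{a∼π'}[A_γ^π(s,a)]|. If E_{s∼d_π}[D_TV(π'∥π)[s]] > 0 and ε := max_s|E_{a∼π'}[Ā^π(s,a)]| > 0, then lim_{γ→1} L(γ) = −∞; in particular the bound (1−γ)(ρ_γ(π')−ρ_γ(π)) ≥ (1−γ)·(1/(1−γ))·L(γ) becomes trivial as γ → 1. -/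
open Finset Filter

/-- the discounted policy improvement lower bound
L(γ) = E_{s∼d_{π,γ}, a∼π'}[A_γ^π(s,a)] − (2γε_γ/(1−γ))·E_{s∼d_{π,γ}}[D_TV(π'∥π)[s]]
tends to −∞ as γ → 1, whenever E_{s∼d_π}[D_TV(π'∥π)[s]] > 0 and
ε = max_s|E_{a∼π'}[Ā^π(s,a)]| > 0. -/
theorem discounted_bound_trivial_in_limit
    {S A : Type*} [Fintype S] [Fintype A] [Nonempty S]
    (π π' : S → A → ℝ)
    (hπ_nonneg : ∀ s a, 0 ≤ π s a) (hπ_sum : ∀ s, ∑ a, π s a = 1)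
    (hπ'_nonneg : ∀ s a, 0 ≤ π' s a) (hπ'_sum : ∀ s, ∑ a, π' s a = 1)
    -- stationary distribution d_π and discounted visitation distributions d_{π,γ}
    (d : S → ℝ) (hd_nonneg : ∀ s, 0 ≤ d s) (hd_sum : ∑ s, d s = 1)
    (dγ : ℝ → S → ℝ)
    (hdγ : ∀ s, Tendsto (fun γ => dγ γ s)
      (nhdsWithin 1 (Set.Ioo (0 : ℝ) 1)) (nhds (d s)))
    -- discounted advantage A_γ^π converging to the average-reward advantage Ā^π
    (Ab : S → A → ℝ) (Aγ : ℝ → S → A → ℝ)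
    (hAγ : ∀ s a, Tendsto (fun γ => Aγ γ s a)
      (nhdsWithin 1 (Set.Ioo (0 : ℝ) 1)) (nhds (Ab s a)))
    -- ε_γ = max_s |E_{a∼π'}[A_γ^π(s,a)]| and ε = max_s |E_{a∼π'}[Ā^π(s,a)]|
    (εγ : ℝ → ℝ)
    (hεγ : ∀ γ, εγ γ = Finset.univ.sup' Finset.univ_nonempty
      (fun s => |∑ a, π' s a * Aγ γ s a|))
    (ε : ℝ)
    (hε : ε = Finset.univ.sup' Finset.univ_nonempty
      (fun s => |∑ a, π' s a * Ab s a|))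
    (hε_pos : 0 < ε)
    (htv_pos : 0 < ∑ s, d s * ((1 / 2) * ∑ a, |π' s a - π s a|)) :
    Tendsto (fun γ =>
        (∑ s, dγ γ s * ∑ a, π' s a * Aγ γ s a) -
          (2 * γ * εγ γ / (1 - γ)) *
            ∑ s, dγ γ s * ((1 / 2) * ∑ a, |π' s a - π s a|))
      (nhdsWithin 1 (Set.Ioo (0 : ℝ) 1)) atBot := by
  set l := nhdsWithin (1 : ℝ) (Set.Ioo (0 : ℝ) 1) with hl
  -- expectation of advantage per state
  have hEs : ∀ s : S, Tendsto (fun γ => ∑ a, π' s a * Aγ γ s a) l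
      (nhds (∑ a, π' s a * Ab s a)) := fun s =>
    tendsto_finset_sum _ fun a _ => (tendsto_const_nhds.mul (hAγ s a))
  -- first term
  have hS : Tendsto (fun γ => ∑ s, dγ γ s * ∑ a, π' s a * Aγ γ s a) l
      (nhds (∑ s, d s * ∑ a, π' s a * Ab s a)) :=
    tendsto_finset_sum _ fun s _ => (hdγ s).mul (hEs s)
  -- εγ → ε
  have hεlim : Tendsto εγ l (nhds ε) := by
    rw [hε]
    have := Filter.Tendsto.finset_sup'_nhds_apply (f := fun s γ => |∑ a, π' s a * Aγ γ s a|)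
      (l := l) (g := fun s => |∑ a, π' s a * Ab s a|) Finset.univ_nonempty
      (fun s _ => (hEs s).abs)
    exact this.congr fun γ => (hεγ γ).symm
  -- TV term
  have hT : Tendsto (fun γ => ∑ s, dγ γ s * ((1 / 2) * ∑ a, |π' s a - π s a|)) l
      (nhds (∑ s, d s * ((1 / 2) * ∑ a, |π' s a - π s a|))) :=
    tendsto_finset_sum _ fun s _ => (hdγ s).mul tendsto_const_nhds
  -- 2γ εγ T → positive constant
  set C := 2 * 1 * ε * ∑ s, d s * ((1 / 2) * ∑ a, |π' s a - π s a|) with hC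
  have hγ1 : Tendsto (fun γ : ℝ => γ) l (nhds 1) :=
    tendsto_id.mono_left nhdsWithin_le_nhds
  have hnum : Tendsto (fun γ => 2 * γ * εγ γ * ∑ s, dγ γ s *
      ((1 / 2) * ∑ a, |π' s a - π s a|)) l (nhds C) :=
    ((tendsto_const_nhds.mul hγ1).mul hεlim).mul hT
  have hCpos : 0 < C := by
    have : (0:ℝ) < 2 * 1 * ε := by linarith
    exact mul_pos this htv_pos
  -- (1-γ)⁻¹ → atTop
  have hinv : Tendsto (fun γ : ℝ => (1 - γ)⁻¹) l atTop := by
    apply tendsto_inv_nhdsGT_zero.comp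
    apply tendsto_nhdsWithin_of_tendsto_nhds_of_eventually_within
    · have : Tendsto (fun γ : ℝ => 1 - γ) l (nhds (1 - 1)) :=
        tendsto_const_nhds.sub hγ1
      simpa using this
    · filter_upwards [self_mem_nhdsWithin] with γ hγ
      exact Set.mem_Ioi.mpr (by linarith [hγ.2])
  have hprod : Tendsto (fun γ => (2 * γ * εγ γ * ∑ s, dγ γ s *
      ((1 / 2) * ∑ a, |π' s a - π s a|)) * (1 - γ)⁻¹) l atTop :=
    hnum.pos_mul_atTop hCpos hinv
  have := hS.add_atBot (tendsto_neg_atTop_atBot.comp hprod)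
  refine this.congr fun γ => ?_
  simp only [Function.comp_apply, div_eq_mul_inv]
  ring
end

section
/- Suppose policies π_θ and π_{θ_k} satisfy the surrogate average-cost constraint ρ_c(π_{θ_k}) + E_{s∼d_{π_{θ_k}}, a∼π_θ}[Ā_c^{π_{θ_k}}(s,a)] ≤ b and the trust-region constraint E_{s∼d_{π_{θ_k}}}[D_KL(π_θ∥π_{θ_k})[s]] ≤ δ. Then the true average cost satisfies ρ_c(π_θ) ≤ b + ξ_c·sqrt(2δ), where ξ_c = (κ* − 1)·max_s E_{a∼π_θ}|Ā_c^{π_{θ_k}}(s,a)|. -/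
open Finset

/-- Per-state KL divergence D_KL(π ∥ π')[s]. -/
noncomputable def klAt {S A : Type*} [Fintype A] (π π' : S → A → ℝ) (s : S) : ℝ :=
  ∑ a, π s a * Real.log (π s a / π' s a)

/-- worst-case average-cost constraint violation. If π_θ satisfies
the surrogate constraint ρ_c(π_{θ_k}) + E_{s∼d_{π_{θ_k}}, a∼π_θ}[Ā_c^{π_{θ_k}}] ≤ b
and the trust-region constraint E_{s∼d_{π_{θ_k}}}[D_KL(π_θ∥π_{θ_k})[s]] ≤ δ, then
ρ_c(π_θ) ≤ b + ξ_c·sqrt(2δ), ξ_c = (κ* − 1)·max_s E_{a∼π_θ}|Ā_c^{π_{θ_k}}(s,a)|. -/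
theorem average_cost_worst_case_violation
    {S A : Type*} [Fintype S] [Fintype A] [Nonempty S]
    -- current policy π_{θ_k} and candidate policy π_θ
    (πk πθ : S → A → ℝ)
    (hπk_nonneg : ∀ s a, 0 ≤ πk s a) (hπk_sum : ∀ s, ∑ a, πk s a = 1)
    (hπθ_nonneg : ∀ s a, 0 ≤ πθ s a) (hπθ_sum : ∀ s, ∑ a, πθ s a = 1)
    -- stationary distribution of π_{θ_k}
    (d : S → ℝ) (hd_nonneg : ∀ s, 0 ≤ d s) (hd_sum : ∑ s, d s = 1)
    -- average costs and the average-cost advantage function of π_{θ_k}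
    (ρc_k ρc_θ : ℝ) (Abc : S → A → ℝ)
    -- maximal Kemeny constant
    (κstar : ℝ) (hκ1 : 1 ≤ κstar)
    -- the average-cost policy improvement bound (assumed):
    -- |ρ_c(π_θ) − ρ̃_c(π_θ)| ≤ (κ*−1)·max_s E_{a∼π_θ}|Ā_c|·sqrt(2·E_{d}[KL])
    (hbound : |ρc_θ - (ρc_k + ∑ s, d s * ∑ a, πθ s a * Abc s a)| ≤
      (κstar - 1) *
        (Finset.univ.sup' Finset.univ_nonempty (fun s => ∑ a, πθ s a * |Abc s a|)) *
        Real.sqrt (2 * ∑ s, d s * klAt πθ πk s))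
    -- constraint bound and step size
    (b δ : ℝ) (hδ : 0 ≤ δ)
    -- surrogate average-cost constraint
    (hsurr : ρc_k + (∑ s, d s * ∑ a, πθ s a * Abc s a) ≤ b)
    -- trust-region constraint
    (hkl : ∑ s, d s * klAt πθ πk s ≤ δ) :
    ρc_θ ≤ b +
      (κstar - 1) *
        (Finset.univ.sup' Finset.univ_nonempty (fun s => ∑ a, πθ s a * |Abc s a|)) *
        Real.sqrt (2 * δ) := by
  have hsup0 : 0 ≤ Finset.univ.sup' Finset.univ_nonempty (fun s => ∑ a, πθ s a * |Abc s a|) := by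
    obtain ⟨s0⟩ := (inferInstance : Nonempty S)
    refine le_trans ?_ (Finset.le_sup' _ (Finset.mem_univ s0))
    exact Finset.sum_nonneg fun a _ => mul_nonneg (hπθ_nonneg s0 a) (abs_nonneg _)
  have hξ : 0 ≤ (κstar - 1) * (Finset.univ.sup' Finset.univ_nonempty (fun s => ∑ a, πθ s a * |Abc s a|)) :=
    mul_nonneg (by linarith) hsup0
  have hsqrt : Real.sqrt (2 * ∑ s, d s * klAt πθ πk s) ≤ Real.sqrt (2 * δ) :=
    Real.sqrt_le_sqrt (by linarith)
  have h1 : ρc_θ - (ρc_k + ∑ s, d s * ∑ a, πθ s a * Abc s a) ≤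
      (κstar - 1) * (Finset.univ.sup' Finset.univ_nonempty (fun s => ∑ a, πθ s a * |Abc s a|)) *
        Real.sqrt (2 * δ) :=
    le_trans (le_trans (le_abs_self _) hbound) (mul_le_mul_of_nonneg_left hsqrt hξ)
  linarith
end
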